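/- Let Δ : U^d → S and Θ : V^d → T be nondegenerate multilinear maps. If Δ and Θ are symmetrically equivalent via bijections φ_1,...,φ_d and ψ, then the map Ψ : Z(U,S,Δ) → Z(V,T,Θ) given by Ψ(φ) = φ_1 ∘ φ ∘ φ_1⁻¹ is a well-defined isomorphism of k-algebras. -/

import Mathlib

open Function

/-- The center condition: `φ` is self-adjoint with respect to the multilinear map `Θ`
in every pair of slots. -/
def InCenter {k : Type*} [Field k] {d : ℕ} {V T : Type*} [AddCommGroup V] [Module k V]
    [AddCommGroup T] [Module k T]
    (Θ : MultilinearMap k (fun _ : Fin d => V) T) (φ : V →ₗ[k] V) : Prop :=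
  ∀ (i j : Fin d) (v : Fin d → V),
    Θ (Function.update v i (φ (v i))) = Θ (Function.update v j (φ (v j)))

/-- Nondegeneracy of a multilinear map: the only vector annihilating it in some slot
against all others is `0`. -/
def Nondeg {k : Type*} [Field k] {d : ℕ} {V T : Type*} [AddCommGroup V] [Module k V]
    [AddCommGroup T] [Module k T]
    (Θ : MultilinearMap k (fun _ : Fin d => V) T) : Prop :=
  ∀ u : V, (∀ (i : Fin d) (v : Fin d → V), Θ (Function.update v i u) = 0) → u = 0

/-!
Transporting the self-adjointness identity of `φ₀` through the equivalence read with the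
ordering `σ` shows that, for every `v`, the value of `Θ` at `v` with slot `i` replaced by
`φ_{σ i} φ₀ φ_{σ i}⁻¹ (v i)` does not depend on `i`. Letting `σ` run over all permutations,
with at least three slots available, this value does not depend on `i` either when every
slot uses the same `φ_a`: conjugation by `φ_a` maps the center of `Δ` into that of `Θ`, and
the inverse equivalence gives the converse.
-/

lemma eq_of_forall_perm_eq {α β : Type*} [DecidableEq α] (hα : 3 ≤ ENat.card α)
    (F : α → α → β) (hF : ∀ (σ : Equiv.Perm α) (i j : α), F i (σ i) = F j (σ j))
    (i j a : α) : F i a = F j a := by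
  -- pass from slot `i` to slot `j` through a third slot `l`, where `swap i a` and
  -- `swap i a * swap i j` agree
  obtain ⟨l, hli, hlj⟩ := ENat.exists_ne_ne_of_three_le hα i j
  set σ := Equiv.swap i a
  have hσl : (σ * Equiv.swap i j) l = σ l := by
    rw [Equiv.Perm.mul_apply, Equiv.swap_apply_of_ne_of_ne hli hlj]
  calc F i a = F i (σ i) := by rw [Equiv.swap_apply_left]
    _ = F l (σ l) := hF σ i l
    _ = F l ((σ * Equiv.swap i j) l) := by rw [hσl]
    _ = F j ((σ * Equiv.swap i j) j) := hF _ l j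
    _ = F j a := by rw [Equiv.Perm.mul_apply, Equiv.swap_apply_right, Equiv.swap_apply_left]

section SymmetricEquivalence

variable {k : Type*} [Field k] {d : ℕ} {U V S T : Type*}
  [AddCommGroup U] [Module k U] [AddCommGroup V] [Module k V]
  [AddCommGroup S] [Module k S] [AddCommGroup T] [Module k T]

def IsSymmEquiv (Δ : MultilinearMap k (fun _ : Fin d => U) S)
    (Θ : MultilinearMap k (fun _ : Fin d => V) T)
    (φ : Fin d → (U ≃ₗ[k] V)) (ψ : S ≃ₗ[k] T) : Prop :=
  ∀ (σ : Equiv.Perm (Fin d)) (u : Fin d → U), ψ (Δ u) = Θ (fun m => φ (σ m) (u m))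

variable {Δ : MultilinearMap k (fun _ : Fin d => U) S}
  {Θ : MultilinearMap k (fun _ : Fin d => V) T} {φ : Fin d → (U ≃ₗ[k] V)} {ψ : S ≃ₗ[k] T}

lemma IsSymmEquiv.symm (h : IsSymmEquiv Δ Θ φ ψ) :
    IsSymmEquiv Θ Δ (fun m => (φ m).symm) ψ.symm := by
  intro σ v
  rw [ψ.symm_apply_eq, h σ]
  simp only [LinearEquiv.apply_symm_apply]

lemma IsSymmEquiv.map_update_conj (h : IsSymmEquiv Δ Θ φ ψ) (φ₀ : U →ₗ[k] U)
    (σ : Equiv.Perm (Fin d)) (i : Fin d) (v : Fin d → V) :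
    Θ (update v i ((φ (σ i)).conj φ₀ (v i))) =
      ψ (Δ (update (fun m => (φ (σ m)).symm (v m)) i
        (φ₀ ((φ (σ i)).symm (v i))))) := by
  rw [h σ]
  congr 1
  funext m
  rw [apply_update (fun m => φ (σ m))]
  simp only [LinearEquiv.apply_symm_apply, LinearEquiv.conj_apply_apply]

lemma IsSymmEquiv.inCenter_conj (hd : 3 ≤ d) (h : IsSymmEquiv Δ Θ φ ψ) {φ₀ : U →ₗ[k] U}
    (hφ₀ : InCenter Δ φ₀) (a : Fin d) : InCenter Θ ((φ a).conj φ₀) := by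
  intro i j v
  refine eq_of_forall_perm_eq (by simpa using hd)
    (fun i b => Θ (update v i ((φ b).conj φ₀ (v i)))) (fun σ p q => ?_) i j a
  rw [h.map_update_conj, h.map_update_conj, hφ₀ p q]

lemma IsSymmEquiv.inCenter_conj_iff (hd : 3 ≤ d) (h : IsSymmEquiv Δ Θ φ ψ)
    (φ₀ : U →ₗ[k] U) (a : Fin d) : InCenter Θ ((φ a).conj φ₀) ↔ InCenter Δ φ₀ := by
  refine ⟨fun hφ₀ => ?_, fun hφ₀ => h.inCenter_conj hd hφ₀ a⟩
  simpa using h.symm.inCenter_conj hd hφ₀ a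

end SymmetricEquivalence

/-- a symmetric equivalence between nondegenerate multilinear maps
induces an isomorphism of centers `Ψ(φ₀) = φ₁ ∘ φ₀ ∘ φ₁⁻¹`: conjugation by `φ₁` maps
`Z(U,S,Δ)` bijectively onto `Z(V,T,Θ)` (and being an algebra map, it is a `k`-algebra
isomorphism between the centers). -/
theorem symEquiv_center_isomorphism {k : Type*} [Field k] {d : ℕ} (hd : 3 ≤ d)
    {U V S T : Type*} [AddCommGroup U] [Module k U]
    [AddCommGroup V] [Module k V]
    [AddCommGroup S] [Module k S]
    [AddCommGroup T] [Module k T]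
    (Δ : MultilinearMap k (fun _ : Fin d => U) S)
    (Θ : MultilinearMap k (fun _ : Fin d => V) T)
    (φ : Fin d → (U ≃ₗ[k] V)) (ψ : S ≃ₗ[k] T)
    (hequiv : ∀ (σ : Equiv.Perm (Fin d)) (u : Fin d → U),
      ψ (Δ u) = Θ (fun m => φ (σ m) (u m))) :
    ∀ φ₀ : U →ₗ[k] U,
      InCenter Δ φ₀ ↔
        InCenter Θ ((φ ⟨0, by omega⟩).toLinearMap ∘ₗ φ₀ ∘ₗ
          (φ ⟨0, by omega⟩).symm.toLinearMap) := fun φ₀ =>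
  ((show IsSymmEquiv Δ Θ φ ψ from hequiv).inCenter_conj_iff hd φ₀ _).symm
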